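/- There exists a universal constant C > 0 such that for every n ≥ 2 the lazy random walk on the hypercube {0,1}^n — which at each step holds with probability 1/2 and otherwise flips a uniformly random coordinate, so P(x,x) = 1/2 and P(x,y) = 1/(2n) when x and y differ in exactly one coordinate — has total variation mixing time τ(1/4) ≤ C·n·(log n)². -/

import Mathlib

open Finset

noncomputable section

attribute [local instance] Classical.propDecidable

variable {K : Type*} [Fintype K]

/-- `matPow P t u v` is the `t`-step transition probability from `u` to `v`. -/
def matPow (P : K → K → ℝ) : ℕ → K → K → ℝ
  | 0 => fun u v => if u = v then 1 else 0
  | (t + 1) => fun u v => ∑ w, matPow P t u w * P w v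

/-- `p` is a probability distribution. -/
def IsDist (p : K → ℝ) : Prop := (∀ v, 0 ≤ p v) ∧ ∑ v, p v = 1

/-- the distribution after `t` steps starting from `p`. -/
def stepDist (P : K → K → ℝ) (p : K → ℝ) (t : ℕ) (v : K) : ℝ :=
  ∑ u, p u * matPow P t u v

/-- total variation distance. -/
def tvDist (μ π : K → ℝ) : ℝ := (1 / 2) * ∑ v, |μ v - π v|

/-- total variation mixing time `τ(ε)`: the max over initial distributions of the
least time at which total variation distance drops to `ε`. -/
def mixTV (P : K → K → ℝ) (π : K → ℝ) (ε : ℝ) : ℕ :=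
  sSup {n : ℕ | ∃ p : K → ℝ, IsDist p ∧
    n = sInf {t : ℕ | tvDist (stepDist P p t) π ≤ ε}}

/-- the lazy random walk on the hypercube `{0,1}^n`. -/
def cubeP (n : ℕ) (x y : Fin n → Bool) : ℝ :=
  if x = y then 1 / 2
  else if (Finset.univ.filter (fun i => x i ≠ y i)).card = 1 then 1 / (2 * n)
  else 0

/-!
The characters `χ_S(x) = (-1) ^ #{i ∈ S | x i}` are orthogonal and are eigenfunctions of the
walk with eigenvalue `1 - #S / n`, which is nonnegative because the walk is lazy. Hence
`P^t(x, y) = 2⁻ⁿ ∑_S (1 - #S/n)^t χ_S(x) χ_S(y)`, so every entry of `P^t` is within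
`2⁻ⁿ ((1 + e^{-t/n})ⁿ - 1)` of the uniform value and the total variation distance after `t` steps
is at most `(exp (n e^{-t/n}) - 1) / 2`. This is below `1/4` as soon as `t ≥ n log (4n)`.
-/

section General

variable {P : K → K → ℝ} {π : K → ℝ} {ε : ℝ} {t : ℕ}

theorem tvDist_stepDist_le {p : K → ℝ} (hp : IsDist p)
    (h : ∀ u, tvDist (matPow P t u) π ≤ ε) : tvDist (stepDist P p t) π ≤ ε := by
  have hdiff : ∀ v, stepDist P p t v - π v = ∑ u, p u * (matPow P t u v - π v) := by
    intro v
    simp only [stepDist, mul_sub, sum_sub_distrib, ← sum_mul, hp.2, one_mul]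
  calc tvDist (stepDist P p t) π
      ≤ 1 / 2 * ∑ v, ∑ u, p u * |matPow P t u v - π v| := by
        unfold tvDist
        gcongr with v
        rw [hdiff]
        refine (abs_sum_le_sum_abs _ _).trans_eq (sum_congr rfl fun u _ => ?_)
        rw [abs_mul, abs_of_nonneg (hp.1 u)]
    _ = ∑ u, p u * tvDist (matPow P t u) π := by
        rw [sum_comm, mul_sum]
        refine sum_congr rfl fun u _ => ?_
        rw [tvDist, ← mul_sum]
        ring
    _ ≤ ∑ u, p u * ε := by gcongr with u; exacts [hp.1 u, h u]
    _ = ε := by rw [← sum_mul, hp.2, one_mul]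

theorem mixTV_le_of_tvDist_matPow_le (h : ∀ u, tvDist (matPow P t u) π ≤ ε) :
    mixTV P π ε ≤ t := by
  refine csSup_le' ?_
  rintro _ ⟨p, hp, rfl⟩
  exact Nat.sInf_le (tvDist_stepDist_le hp h)

theorem matPow_eq_sum_of_leftEigen {ι : Type*} [Fintype ι] (φ ψ : ι → K → ℝ) (c : ι → ℝ)
    (hid : ∀ u v, (if u = v then 1 else 0) = ∑ i, φ i u * ψ i v)
    (heig : ∀ i v, ∑ w, ψ i w * P w v = c i * ψ i v) (t : ℕ) (u v : K) :
    matPow P t u v = ∑ i, c i ^ t * φ i u * ψ i v := by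
  induction t generalizing v with
  | zero => simp [matPow, hid]
  | succ t ih =>
    calc matPow P (t + 1) u v = ∑ i, c i ^ t * φ i u * ∑ w, ψ i w * P w v := by
          simp only [matPow, ih, sum_mul, mul_sum]
          rw [sum_comm]
          exact sum_congr rfl fun i _ => sum_congr rfl fun w _ => by ring
      _ = ∑ i, c i ^ (t + 1) * φ i u * ψ i v := by
          simp only [heig]
          exact sum_congr rfl fun i _ => by ring

end General

theorem sum_ite_eq_singleton {α : Type*} [Fintype α] [DecidableEq α] (s : Finset α) (c : ℝ) :
    ∑ i, (if s = {i} then c else 0) = if s.card = 1 then c else 0 := by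
  by_cases hs : s.card = 1
  · obtain ⟨a, rfl⟩ := card_eq_one.mp hs
    simp [singleton_inj]
  · rw [if_neg hs]
    exact sum_eq_zero fun i _ => if_neg fun h => hs (by simp [h])

section Hypercube

variable {n : ℕ}

def cubeChar (S : Finset (Fin n)) (x : Fin n → Bool) : ℝ :=
  ∏ i ∈ S, if x i then -1 else 1

theorem abs_cubeChar (S : Finset (Fin n)) (x : Fin n → Bool) : |cubeChar S x| = 1 := by
  rw [cubeChar, abs_prod]
  exact prod_eq_one fun i _ => by split_ifs <;> simp

theorem cubeChar_update_not (S : Finset (Fin n)) (x : Fin n → Bool) (i : Fin n) :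
    cubeChar S (Function.update x i (!x i)) = (if i ∈ S then -1 else 1) * cubeChar S x := by
  have hflip : ∀ j, (if Function.update x i (!x i) j then (-1 : ℝ) else 1)
      = (if j = i then -1 else 1) * if x j then -1 else 1 := by
    intro j
    by_cases hj : j = i
    · subst hj; cases x j <;> simp
    · simp [hj]
  simp only [cubeChar, hflip, prod_mul_distrib, prod_ite_eq']

theorem sum_cubeChar_mul_cubeChar (x y : Fin n → Bool) :
    ∑ S, cubeChar S x * cubeChar S y = if x = y then 2 ^ n else 0 := by
  have hfactor : ∀ i, 1 + (if x i then (-1 : ℝ) else 1) * (if y i then -1 else 1)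
      = if x i = y i then 2 else 0 := by
    intro i; cases x i <;> cases y i <;> norm_num
  simp only [cubeChar, ← prod_mul_distrib]
  rw [← powerset_univ, ← prod_one_add, prod_congr rfl fun i _ => hfactor i]
  simp [Fintype.prod_ite_zero, funext_iff]

theorem eq_update_not_iff (x y : Fin n → Bool) (i : Fin n) :
    x = Function.update y i (!y i) ↔ univ.filter (fun j => x j ≠ y j) = {i} := by
  simp only [funext_iff, Finset.ext_iff, mem_filter, mem_univ, true_and, mem_singleton,
    Function.update_apply]
  refine forall_congr' fun j => ?_
  rcases eq_or_ne j i with rfl | hj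
  · cases x j <;> cases y j <;> simp
  · simp [hj]

theorem cubeP_eq (x y : Fin n → Bool) :
    cubeP n x y = (if x = y then 1 / 2 else 0)
      + ∑ i, if x = Function.update y i (!y i) then (1 / (2 * n) : ℝ) else 0 := by
  simp only [eq_update_not_iff, sum_ite_eq_singleton, cubeP]
  split_ifs with h <;> simp_all

theorem sum_mul_cubeP (f : (Fin n → Bool) → ℝ) (y : Fin n → Bool) :
    ∑ x, f x * cubeP n x y = f y / 2 + (∑ i, f (Function.update y i (!y i))) / (2 * n) := by
  simp only [cubeP_eq, mul_add, sum_add_distrib, mul_sum, mul_ite, mul_zero, sum_ite_eq']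
  rw [sum_comm, sum_div]
  simp only [sum_ite_eq', mem_univ, if_true]
  congr 1 <;> [ring; exact sum_congr rfl fun i _ => by ring]

theorem sum_cubeChar_mul_cubeP (hn : n ≠ 0) (S : Finset (Fin n)) (y : Fin n → Bool) :
    ∑ x, cubeChar S x * cubeP n x y = (1 - S.card / n) * cubeChar S y := by
  have hsign : ∑ i : Fin n, (if i ∈ S then (-1 : ℝ) else 1) = n - 2 * S.card := by
    have hsplit : ∀ i : Fin n,
        (if i ∈ S then (-1 : ℝ) else 1) = 1 - 2 * if i ∈ S then 1 else 0 := by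
      intro i; split_ifs <;> ring
    simp only [hsplit, sum_sub_distrib, ← mul_sum, sum_boole]
    simp
  rw [sum_mul_cubeP]
  simp only [cubeChar_update_not, ← sum_mul, hsign]
  field_simp
  ring

theorem matPow_cubeP (hn : n ≠ 0) (t : ℕ) (x y : Fin n → Bool) :
    matPow (cubeP n) t x y
      = ∑ S, (1 - S.card / n : ℝ) ^ t * (cubeChar S x / 2 ^ n) * cubeChar S y := by
  refine matPow_eq_sum_of_leftEigen (fun S x => cubeChar S x / 2 ^ n) cubeChar _
    (fun x y => ?_) (sum_cubeChar_mul_cubeP hn) t x y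
  simp only [div_mul_eq_mul_div, ← sum_div, sum_cubeChar_mul_cubeChar]
  split_ifs <;> simp

theorem abs_matPow_cubeP_sub_le (hn : n ≠ 0) (t : ℕ) (x y : Fin n → Bool) :
    |matPow (cubeP n) t x y - 1 / 2 ^ n|
      ≤ (∑ S ∈ univ.erase (∅ : Finset (Fin n)), |(1 - S.card / n : ℝ)| ^ t) / 2 ^ n := by
  rw [matPow_cubeP hn, ← add_sum_erase _ _ (mem_univ ∅)]
  have hempty : (1 - ((∅ : Finset (Fin n)).card : ℝ) / n) ^ t * (cubeChar ∅ x / 2 ^ n)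
      * cubeChar ∅ y = 1 / 2 ^ n := by
    simp [cubeChar]
  rw [hempty, add_sub_cancel_left, sum_div]
  refine (abs_sum_le_sum_abs _ _).trans (sum_le_sum fun S _ => ?_)
  simp [abs_mul, abs_cubeChar, div_eq_mul_inv]

theorem sum_abs_pow_eigenvalue_le (t : ℕ) :
    ∑ S ∈ univ.erase (∅ : Finset (Fin n)), |(1 - S.card / n : ℝ)| ^ t
      ≤ Real.exp (n * Real.exp (-(t / n))) - 1 := by
  set r := Real.exp (-(t / n : ℝ))
  have hterm : ∀ S : Finset (Fin n), |(1 - S.card / n : ℝ)| ^ t ≤ r ^ S.card := by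
    intro S
    have hS : (S.card : ℝ) / n ≤ 1 :=
      div_le_one_of_le₀ (by exact_mod_cast (card_le_univ S).trans_eq (Fintype.card_fin n))
        (Nat.cast_nonneg n)
    calc |(1 - S.card / n : ℝ)| ^ t = (1 - S.card / n : ℝ) ^ t := by
          rw [abs_of_nonneg (sub_nonneg.mpr hS)]
      _ ≤ Real.exp (-(S.card / n)) ^ t := by
          gcongr
          linarith [Real.add_one_le_exp (-(S.card / n : ℝ))]
      _ = r ^ S.card := by
          rw [← Real.exp_nat_mul, ← Real.exp_nat_mul]
          ring_nf
  have hsum : ∑ S : Finset (Fin n), r ^ S.card = ∏ _i : Fin n, (1 + r) := by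
    rw [prod_one_add, powerset_univ]
    simp only [prod_const]
  calc ∑ S ∈ univ.erase (∅ : Finset (Fin n)), |(1 - S.card / n : ℝ)| ^ t
      ≤ ∑ S ∈ univ.erase (∅ : Finset (Fin n)), r ^ S.card := sum_le_sum fun S _ => hterm S
    _ = ∏ _i : Fin n, (1 + r) - 1 := by
        rw [← hsum, ← add_sum_erase _ _ (mem_univ ∅)]
        simp
    _ ≤ Real.exp (∑ _i : Fin n, r) - 1 := by
        gcongr
        exact Real.prod_one_add_le_exp_sum _ fun _ => (Real.exp_pos _).le
    _ = Real.exp (n * r) - 1 := by simp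

theorem tvDist_matPow_cubeP_le (hn : n ≠ 0) (t : ℕ) (x : Fin n → Bool) :
    tvDist (matPow (cubeP n) t x) (fun _ => 1 / 2 ^ n)
      ≤ (Real.exp (n * Real.exp (-(t / n))) - 1) / 2 := by
  calc tvDist (matPow (cubeP n) t x) (fun _ => 1 / 2 ^ n)
      ≤ 1 / 2 * ∑ _y : Fin n → Bool,
          (∑ S ∈ univ.erase (∅ : Finset (Fin n)), |(1 - S.card / n : ℝ)| ^ t) / 2 ^ n := by
        unfold tvDist
        gcongr with y
        exact abs_matPow_cubeP_sub_le hn t x y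
    _ = (∑ S ∈ univ.erase (∅ : Finset (Fin n)), |(1 - S.card / n : ℝ)| ^ t) / 2 := by
        rw [sum_const, card_univ, Fintype.card_fun, Fintype.card_bool, Fintype.card_fin,
          nsmul_eq_mul, Nat.cast_pow, Nat.cast_ofNat]
        field_simp
    _ ≤ (Real.exp (n * Real.exp (-(t / n))) - 1) / 2 := by
        gcongr
        exact sum_abs_pow_eigenvalue_le t

theorem tvDist_matPow_cubeP_le_quarter (hn : n ≠ 0) (x : Fin n → Bool) :
    tvDist (matPow (cubeP n) (n * ⌈Real.log (4 * n)⌉₊) x) (fun _ => 1 / 2 ^ n) ≤ 1 / 4 := by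
  have hnpos : (0 : ℝ) < n := by positivity
  set a := (n : ℝ) * Real.exp (-(((n * ⌈Real.log (4 * n)⌉₊ : ℕ) : ℝ) / n)) with ha_def
  have ha : a ≤ 1 / 4 := by
    calc a = n * Real.exp (-⌈Real.log (4 * n)⌉₊) := by
          rw [ha_def, Nat.cast_mul, mul_div_cancel_left₀ _ hnpos.ne']
      _ ≤ n * Real.exp (-Real.log (4 * n)) := by
          gcongr
          exact Nat.le_ceil _
      _ = 1 / 4 := by
          rw [Real.exp_neg, Real.exp_log (by positivity)]
          field_simp
  have hexp : Real.exp a ≤ 1 / (1 - a) :=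
    Real.exp_bound_div_one_sub_of_interval (by positivity) (by linarith)
  have hinv : 1 / (1 - a) ≤ 4 / 3 := by
    rw [div_le_iff₀ (by linarith)]
    linarith
  refine (tvDist_matPow_cubeP_le hn _ x).trans ?_
  linarith

end Hypercube

theorem natCast_mul_ceil_log_le {n : ℕ} (hn : 2 ≤ n) :
    ((n * ⌈Real.log (4 * n)⌉₊ : ℕ) : ℝ) ≤ 10 * n * Real.log n ^ 2 := by
  have hnpos : (0 : ℝ) < n := by positivity
  have hlog2 : Real.log 2 ≤ Real.log n := Real.log_le_log (by norm_num) (by exact_mod_cast hn)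
  have hlog2_gt := Real.log_two_gt_d9
  have hceil : (⌈Real.log (4 * n)⌉₊ : ℝ) ≤ 2 * Real.log 2 + Real.log n + 1 := by
    have hlog4 : Real.log 4 = 2 * Real.log 2 := by
      rw [show (4 : ℝ) = 2 ^ 2 by norm_num, Real.log_pow, Nat.cast_ofNat]
    rw [Real.log_mul (by norm_num) hnpos.ne', hlog4]
    exact (Nat.ceil_lt_add_one (by linarith)).le
  rw [Nat.cast_mul, show 10 * (n : ℝ) * Real.log n ^ 2 = n * (10 * Real.log n ^ 2) by ring]
  gcongr
  nlinarith

/-- the lazy random walk on the hypercube `{0,1}^n` mixes in time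
`O(n (log n)²)`. -/
theorem cube_mixing_time :
    ∃ C : ℝ, 0 < C ∧ ∀ n : ℕ, 2 ≤ n →
      (mixTV (cubeP n) (fun _ : Fin n → Bool => 1 / 2 ^ n) (1 / 4) : ℝ) ≤
        C * n * Real.log n ^ 2 := by
  refine ⟨10, by norm_num, fun n hn => ?_⟩
  have hmix := mixTV_le_of_tvDist_matPow_le (tvDist_matPow_cubeP_le_quarter (by omega : n ≠ 0))
  exact (Nat.cast_le.mpr hmix).trans (natCast_mul_ceil_log_le hn)
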